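/- Let φ be C⁴ on an open set containing [0,h], and H its cubic Hermite interpolant on [0,h]. Then there is a constant C such that for all x ∈ [0,h], |H'(x) - φ'(x)| ≤ C · M₄ · h³, where M₄ = sup |φ⁽⁴⁾| on [0,h]. -/

import Mathlib

/-!
Expand `φ h`, `φ' h` and `φ' x` about `0` by Taylor's formula with Lagrange remainders. Hermite
interpolation reproduces cubics, so the Taylor polynomials cancel in `H' x - φ' x`, leaving
`h³` times a combination of three values of `φ⁽⁴⁾` with weights `u(1-u)/4`, `u(3u-2)/6` and `u³/6`,
where `u = x / h ∈ [0, 1]`. Each weight is at most `1` in absolute value, so `C = 1` works.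
-/

open Set Finset

theorem exists_taylor_lagrange_of_isOpen {f : ℝ → ℝ} {s : Set ℝ} (hs : IsOpen s) {n : ℕ}
    (hf : ContDiffOn ℝ (n + 1) f s) {a b : ℝ} (hab : a ≤ b) (hsub : Icc a b ⊆ s) :
    ∃ c ∈ Icc a b, f b = ∑ i ∈ range (n + 1), iteratedDeriv i f a * (b - a) ^ i / i.factorial +
      iteratedDeriv (n + 1) f c * (b - a) ^ (n + 1) / (n + 1).factorial := by
  rcases hab.eq_or_lt with rfl | hab
  · exact ⟨a, left_mem_Icc.2 le_rfl, by simp [sum_range_succ']⟩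
  have hI : uIcc a b = Icc a b := uIcc_of_le hab.le
  obtain ⟨c, hc, hrem⟩ :=
    taylor_mean_remainder_lagrange_iteratedDeriv hab.ne (hf.mono (hI ▸ hsub))
  rw [uIoo_of_lt hab] at hc
  refine ⟨c, Ioo_subset_Icc_self hc, ?_⟩
  have hwithin : ∀ i ∈ range (n + 1),
      ((i.factorial : ℝ)⁻¹ * (b - a) ^ i) • iteratedDerivWithin i f (uIcc a b) a =
        iteratedDeriv i f a * (b - a) ^ i / i.factorial := by
    intro i hi
    have hfa : ContDiffAt ℝ i f a :=
      (hf.contDiffAt (hs.mem_nhds (hsub (left_mem_Icc.2 hab.le)))).of_le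
        (by exact_mod_cast (mem_range.1 hi).le)
    rw [iteratedDerivWithin_eq_iteratedDeriv (uniqueDiffOn_uIcc hab.ne) hfa left_mem_uIcc,
      smul_eq_mul]
    ring
  rw [taylor_within_apply, sum_congr rfl hwithin] at hrem
  linarith

theorem exists_taylor_lagrange_deriv_of_isOpen {f : ℝ → ℝ} {s : Set ℝ} (hs : IsOpen s) {n : ℕ}
    (hf : ContDiffOn ℝ (n + 2) f s) {a b : ℝ} (hab : a ≤ b) (hsub : Icc a b ⊆ s) :
    ∃ c ∈ Icc a b, deriv f b =
      ∑ i ∈ range (n + 1), iteratedDeriv (i + 1) f a * (b - a) ^ i / i.factorial +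
        iteratedDeriv (n + 2) f c * (b - a) ^ (n + 1) / (n + 1).factorial := by
  simpa only [iteratedDeriv_succ'] using
    exists_taylor_lagrange_of_isOpen hs (hf.deriv_of_isOpen hs le_rfl) hab hsub

/-- The cubic Hermite interpolant on `[0, h]` with values `y₀, y₁` and slopes `d₀, d₁` at `0, h`. -/
noncomputable def hermiteCubic (h y₀ y₁ d₀ d₁ : ℝ) (x : ℝ) : ℝ :=
  y₀ * (1 - 3 * (x / h) ^ 2 + 2 * (x / h) ^ 3)
    + y₁ * (1 - 3 * (1 - x / h) ^ 2 + 2 * (1 - x / h) ^ 3)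
    + h * (d₀ * ((x / h) * (1 - x / h) ^ 2) - d₁ * ((1 - x / h) * (1 - (1 - x / h)) ^ 2))

theorem hasDerivAt_hermiteCubic {h : ℝ} (hh : h ≠ 0) (y₀ y₁ d₀ d₁ x : ℝ) :
    HasDerivAt (hermiteCubic h y₀ y₁ d₀ d₁)
      (6 * (x / h) * (1 - x / h) * (y₁ - y₀) / h + d₀ * (1 - x / h) * (1 - 3 * (x / h))
        + d₁ * (x / h) * (3 * (x / h) - 2)) x := by
  have hu : HasDerivAt (fun x : ℝ => x / h) h⁻¹ x := by
    simpa using (hasDerivAt_id x).div_const h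
  have hv : HasDerivAt (fun x : ℝ => 1 - x / h) (-h⁻¹) x := by
    simpa using hu.const_sub 1
  have hH := ((((hu.pow 2).const_mul 3).const_sub 1).add ((hu.pow 3).const_mul 2)).const_mul y₀
    |>.add ((((((hv.pow 2).const_mul 3).const_sub 1).add ((hv.pow 3).const_mul 2))).const_mul y₁)
    |>.add ((((hu.mul (hv.pow 2)).const_mul d₀).sub
      ((hv.mul ((hv.const_sub 1).pow 2)).const_mul d₁)).const_mul h)
  refine hH.congr_deriv ?_
  norm_num
  field_simp
  ring

theorem abs_hermite_remainder_combination_le {M a b c u : ℝ} (hu : u ∈ Icc (0 : ℝ) 1)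
    (ha : |a| ≤ M) (hb : |b| ≤ M) (hc : |c| ≤ M) :
    |a * (u * (1 - u)) / 4 + b * (u * (3 * u - 2)) / 6 - c * u ^ 3 / 6| ≤ M := by
  obtain ⟨hu₀, hu₁⟩ := hu
  have h₁ : |u * (1 - u)| ≤ 1 := abs_le.2 ⟨by nlinarith, by nlinarith⟩
  have h₂ : |u * (3 * u - 2)| ≤ 1 := abs_le.2 ⟨by nlinarith, by nlinarith⟩
  have h₃ : |u ^ 3| ≤ 1 := by
    rw [abs_of_nonneg (by positivity)]; exact pow_le_one₀ hu₀ hu₁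
  have hM : 0 ≤ M := (abs_nonneg a).trans ha
  calc _ ≤ |a * (u * (1 - u)) / 4| + |b * (u * (3 * u - 2)) / 6| + |c * u ^ 3 / 6| := by
        grw [abs_sub, abs_add_le]
    _ = |a| * |u * (1 - u)| / 4 + |b| * |u * (3 * u - 2)| / 6 + |c| * |u ^ 3| / 6 := by
        simp only [abs_div, abs_mul, abs_of_pos (by norm_num : (0 : ℝ) < 4),
          abs_of_pos (by norm_num : (0 : ℝ) < 6)]
    _ ≤ M * 1 / 4 + M * 1 / 6 + M * 1 / 6 := by gcongr
    _ ≤ M := by linarith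

theorem hermite_interpolation_gradient_error :
    ∃ C : ℝ, 0 < C ∧
      ∀ (h : ℝ), 0 < h →
      ∀ (s : Set ℝ), IsOpen s → Set.Icc (0:ℝ) h ⊆ s →
      ∀ (φ : ℝ → ℝ), ContDiffOn ℝ 4 φ s →
      ∀ (M₄ : ℝ), (∀ x ∈ Set.Icc (0:ℝ) h, |iteratedDeriv 4 φ x| ≤ M₄) →
      ∀ (H : ℝ → ℝ),
        (∀ x, H x = φ 0 * (1 - 3 * (x / h) ^ 2 + 2 * (x / h) ^ 3)
            + φ h * (1 - 3 * (1 - x / h) ^ 2 + 2 * (1 - x / h) ^ 3)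
            + h * (deriv φ 0 * ((x / h) * (1 - x / h) ^ 2)
                  - deriv φ h * ((1 - x / h) * (1 - (1 - x / h)) ^ 2))) →
      ∀ x ∈ Set.Icc (0:ℝ) h, |deriv H x - deriv φ x| ≤ C * M₄ * h ^ 3 := by
  refine ⟨1, one_pos, fun h hh s hs hsub φ hφ M₄ hM H hH x hx => ?_⟩
  obtain ⟨c₁, hc₁, e₁⟩ := exists_taylor_lagrange_of_isOpen (n := 3) hs hφ hh.le hsub
  obtain ⟨c₂, hc₂, e₂⟩ := exists_taylor_lagrange_deriv_of_isOpen (n := 2) hs hφ hh.le hsub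
  obtain ⟨c₃, hc₃, e₃⟩ := exists_taylor_lagrange_deriv_of_isOpen (n := 2) hs hφ hx.1
    ((Icc_subset_Icc_right hx.2).trans hsub)
  simp only [sum_range_succ, sum_range_zero] at e₁ e₂ e₃
  norm_num [Nat.factorial] at e₁ e₂ e₃
  have hHermite : H = hermiteCubic h (φ 0) (φ h) (deriv φ 0) (deriv φ h) := funext hH
  have herror : deriv H x - deriv φ x = h ^ 3 * (iteratedDeriv 4 φ c₁ * (x / h * (1 - x / h)) / 4
      + iteratedDeriv 4 φ c₂ * (x / h * (3 * (x / h) - 2)) / 6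
      - iteratedDeriv 4 φ c₃ * (x / h) ^ 3 / 6) := by
    rw [hHermite, (hasDerivAt_hermiteCubic hh.ne' _ _ _ _ x).deriv, e₁, e₂, e₃]
    field_simp
    ring
  have hxh : x / h ∈ Icc (0 : ℝ) 1 := ⟨div_nonneg hx.1 hh.le, div_le_one_of_le₀ hx.2 hh.le⟩
  have hc₃' : c₃ ∈ Icc 0 h := Icc_subset_Icc_right hx.2 hc₃
  rw [herror, abs_mul, abs_of_pos (pow_pos hh 3), one_mul, mul_comm]
  gcongr
  exact abs_hermite_remainder_combination_le hxh (hM c₁ hc₁) (hM c₂ hc₂) (hM c₃ hc₃')
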